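/- Consider a state space system Σ ∼ (A,B,C,D) whose state space carries a poset-causal structure with structured subspaces R̄ ⊆ R ⊆ R̃ and N̄ ⊆ N (where R, N are the reachable and unobservable subspaces). Then the compressions Ã, B̃, C̃ of A, B, C to the structured subspace X̃ := R̃ ⊖ (R̄ ∩ N̄) satisfy C A^k B = C̃ Ã^k B̃ for all k ≥ 0, so (Ã, B̃, C̃, D) has the same transfer function moments as Σ; moreover X̃ is a structured subspace, i.e., X̃ = ⊕_{j∈P} X̃_j with X̃_j ⊆ X_j. -/

import Mathlib

open Matrix

attribute [local instance] Classical.propDecidable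

/-- Block index type for a partition `n` over the index set `P`. -/
abbrev BIdx {P : Type*} (n : P → ℕ) : Type _ := (i : P) × Fin (n i)

variable {P : Type*} [Fintype P] [DecidableEq P]

/-- The embedding matrix `I_n(:,S)` of `ℝ^{n_S}` into `ℝ^{n}`. -/
noncomputable def embMat (n : P → ℕ) (S : Set P) :
    Matrix (BIdx n) {a : BIdx n // a.1 ∈ S} ℝ :=
  Matrix.of fun p q => if p = (q : BIdx n) then 1 else 0

/-- The matrix of the orthogonal projection onto the coordinate subspace of block indices in `S`. -/
noncomputable def projMat (n : P → ℕ) (S : Set P) : Matrix (BIdx n) (BIdx n) ℝ :=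
  Matrix.of fun p q => if p = q ∧ p.1 ∈ S then 1 else 0

/-- Downstream set `↓S = {i | ∃ j ∈ S, j ⪰ i}` (where `j ⪰ i` is encoded as `le i j`). -/
def downSet (le : P → P → Prop) (S : Set P) : Set P := {i | ∃ j ∈ S, le i j}

/-- Upstream set `↑S = {i | ∃ j ∈ S, i ⪰ j}`. -/
def upSet (le : P → P → Prop) (S : Set P) : Set P := {i | ∃ j ∈ S, le j i}

/-- Membership of a block matrix in the block incidence space: `G_{ab} = 0` whenever `b ⋡ a`. -/
def Inc (le : P → P → Prop) {n m : P → ℕ} (G : Matrix (BIdx n) (BIdx m) ℝ) : Prop :=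
  ∀ a b, ¬ le a.1 b.1 → G a b = 0

/-- Block compression `G(Q,S)` of a block matrix to block rows in `Q` and block columns in `S`. -/
def bcmp {n m : P → ℕ} (G : Matrix (BIdx n) (BIdx m) ℝ) (Q S : Set P) :
    Matrix {a : BIdx n // a.1 ∈ Q} {a : BIdx m // a.1 ∈ S} ℝ :=
  G.submatrix Subtype.val Subtype.val

/-- The reachable subspace `R(A,B) = im [B, AB, ..., A^{n-1}B]`. -/
noncomputable def reach {ι κ : Type*} [Fintype ι] [Fintype κ] [DecidableEq ι]
    (A : Matrix ι ι ℝ) (B : Matrix ι κ ℝ) : Submodule ℝ (ι → ℝ) :=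
  ⨆ k : Fin (Fintype.card ι), LinearMap.range ((A ^ (k : ℕ) * B).mulVecLin)

/-- The unobservable subspace `N(C,A) = ker [C; CA; ...; CA^{n-1}]`. -/
noncomputable def unobs {ι κ : Type*} [Fintype ι] [Fintype κ] [DecidableEq ι]
    (C : Matrix κ ι ℝ) (A : Matrix ι ι ℝ) : Submodule ℝ (ι → ℝ) :=
  ⨅ k : Fin (Fintype.card ι), LinearMap.ker ((C * A ^ (k : ℕ)).mulVecLin)

/-- The reachable subspace, inside Euclidean space. -/
noncomputable def reachE {ι κ : Type*} [Fintype ι] [Fintype κ] [DecidableEq ι] [DecidableEq κ]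
    (A : Matrix ι ι ℝ) (B : Matrix ι κ ℝ) : Submodule ℝ (EuclideanSpace ℝ ι) :=
  ⨆ k : Fin (Fintype.card ι), LinearMap.range (Matrix.toEuclideanLin (A ^ (k : ℕ) * B))

/-- The unobservable subspace, inside Euclidean space. -/
noncomputable def unobsE {ι κ : Type*} [Fintype ι] [Fintype κ] [DecidableEq ι] [DecidableEq κ]
    (C : Matrix κ ι ℝ) (A : Matrix ι ι ℝ) : Submodule ℝ (EuclideanSpace ℝ ι) :=
  ⨅ k : Fin (Fintype.card ι), LinearMap.ker (Matrix.toEuclideanLin (C * A ^ (k : ℕ)))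

/-- The coordinate subspace `X_S = ⊕_{j ∈ S} X_j` of the global state space. -/
noncomputable def coordSub (n : P → ℕ) (S : Set P) : Submodule ℝ (BIdx n → ℝ) :=
  LinearMap.range (projMat n S).mulVecLin

/-- The coordinate subspace `X_S`, inside Euclidean space. -/
noncomputable def coordE (n : P → ℕ) (S : Set P) : Submodule ℝ (EuclideanSpace ℝ (BIdx n)) :=
  LinearMap.range (Matrix.toEuclideanLin (projMat n S))

/-- The `i`-downstream reachable set `R_i = R(A(↓i,↓i), B(↓i,i))`, embedded into the
global state space via `I_n(:,↓i)`. -/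
noncomputable def Ri (le : P → P → Prop) {n m : P → ℕ}
    (A : Matrix (BIdx n) (BIdx n) ℝ) (B : Matrix (BIdx n) (BIdx m) ℝ) (i : P) :
    Submodule ℝ (BIdx n → ℝ) :=
  Submodule.map (embMat n (downSet le {i})).mulVecLin
    (reach (bcmp A (downSet le {i}) (downSet le {i})) (bcmp B (downSet le {i}) {i}))

/-- The `i`-downstream reachable set, inside Euclidean space. -/
noncomputable def RiE (le : P → P → Prop) {n m : P → ℕ}
    (A : Matrix (BIdx n) (BIdx n) ℝ) (B : Matrix (BIdx n) (BIdx m) ℝ) (i : P) :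
    Submodule ℝ (EuclideanSpace ℝ (BIdx n)) :=
  Submodule.map (Matrix.toEuclideanLin (embMat n (downSet le {i})))
    (reachE (bcmp A (downSet le {i}) (downSet le {i})) (bcmp B (downSet le {i}) {i}))

/-- The `i`-upstream indistinguishable set `N_i = N(C(i,↑i), A(↑i,↑i))`, embedded into the
global state space via `I_n(:,↑i)`. -/
noncomputable def Ni (le : P → P → Prop) {n r : P → ℕ}
    (C : Matrix (BIdx r) (BIdx n) ℝ) (A : Matrix (BIdx n) (BIdx n) ℝ) (i : P) :
    Submodule ℝ (BIdx n → ℝ) :=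
  Submodule.map (embMat n (upSet le {i})).mulVecLin
    (unobs (bcmp C {i} (upSet le {i})) (bcmp A (upSet le {i}) (upSet le {i})))

/-- The `i`-upstream indistinguishable set, inside Euclidean space. -/
noncomputable def NiE (le : P → P → Prop) {n r : P → ℕ}
    (C : Matrix (BIdx r) (BIdx n) ℝ) (A : Matrix (BIdx n) (BIdx n) ℝ) (i : P) :
    Submodule ℝ (EuclideanSpace ℝ (BIdx n)) :=
  Submodule.map (Matrix.toEuclideanLin (embMat n (upSet le {i})))
    (unobsE (bcmp C {i} (upSet le {i})) (bcmp A (upSet le {i}) (upSet le {i})))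

/-- The independently reachable subspace `R̄ = ⊕_j Σ_{i∈↑j} (X_j ∩ R_i)`. -/
noncomputable def Rbar (le : P → P → Prop) {n m : P → ℕ}
    (A : Matrix (BIdx n) (BIdx n) ℝ) (B : Matrix (BIdx n) (BIdx m) ℝ) :
    Submodule ℝ (EuclideanSpace ℝ (BIdx n)) :=
  ⨆ j : P, ⨆ i : P, ⨆ _ : le j i, (coordE n {j} ⊓ RiE le A B i)

/-- The weakly upstream reachable subspace `R̃ = ⊕_j P_{X_j} R`. -/
noncomputable def Rtil {n m : P → ℕ}
    (A : Matrix (BIdx n) (BIdx n) ℝ) (B : Matrix (BIdx n) (BIdx m) ℝ) :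
    Submodule ℝ (EuclideanSpace ℝ (BIdx n)) :=
  ⨆ j : P, Submodule.map (Matrix.toEuclideanLin (projMat n {j})) (reachE A B)

/-- The subspace `N̄ = ⊕_j ∩_{i∈↓j} (N_i ∩ X_j)`. -/
noncomputable def Nbar (le : P → P → Prop) {n r : P → ℕ}
    (C : Matrix (BIdx r) (BIdx n) ℝ) (A : Matrix (BIdx n) (BIdx n) ℝ) :
    Submodule ℝ (EuclideanSpace ℝ (BIdx n)) :=
  ⨆ j : P, ⨅ i : P, ⨅ _ : le i j, (NiE le C A i ⊓ coordE n {j})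

/-! Write `W = R̄ ⊓ N̄`. Poset-causality lets each `i`-downstream subsystem be embedded into the
global one, and each output block `i` of `C A^k x` depend only on the part of `x` upstream of `i`;
this gives `R̄ ≤ R` and `N̄ ≤ N`, so `W ≤ R ⊓ N`. As `W ≤ R ≤ R̃`, every vector of `R̃` differs from
its projection onto `X̃ = R̃ ⊓ Wᗮ` by an element of `W`. Hence, starting from `B u ∈ R`, the
compressed trajectory `Ã^k B̃ u` stays in `R` and differs from `A^k B u` by an element of the
`A`-invariant subspace `N ≤ ker C`, which `C` does not see. Finally `R̃`, `R̄`, `N̄` are sums of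
single-block subspaces, so they are invariant under the self-adjoint block projections, and this
invariance passes to `⊓` and `ᗮ`. -/

section Compression

variable {𝕜 E F G : Type*} [RCLike 𝕜] [NormedAddCommGroup E] [InnerProductSpace 𝕜 E]
  [AddCommGroup F] [Module 𝕜 F] [AddCommGroup G] [Module 𝕜 G]

open Module.End

theorem Submodule.sub_orthogonalProjectionOnto_inf_orthogonal_mem {W K : Submodule 𝕜 E}
    [W.HasOrthogonalProjection] [(K ⊓ Wᗮ).HasOrthogonalProjection] (hWK : W ≤ K) {x : E}
    (hx : x ∈ K) : x - (K ⊓ Wᗮ).orthogonalProjectionOnto x ∈ W := by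
  rw [← Submodule.sup_orthogonal_inf_of_hasOrthogonalProjection hWK] at hx
  obtain ⟨w, hw, v, hv, rfl⟩ := Submodule.mem_sup.mp hx
  have hvV : v ∈ K ⊓ Wᗮ := inf_comm Wᗮ K ▸ hv
  have hwV : w ∈ (K ⊓ Wᗮ)ᗮ :=
    Submodule.orthogonal_le inf_le_right (Submodule.le_orthogonal_orthogonal W hw)
  rw [map_add, Submodule.orthogonalProjectionOnto_apply_of_mem_orthogonal hwV, zero_add,
    Submodule.orthogonalProjectionOnto_mem_subspace_eq_self ⟨v, hvV⟩, add_sub_cancel_right]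
  exact hw

variable {T : E →ₗ[𝕜] E} {R N K W : Submodule 𝕜 E}
  [W.HasOrthogonalProjection] [(K ⊓ Wᗮ).HasOrthogonalProjection]

/-- The compressed trajectory stays in `R` and agrees with the true one modulo `N`. -/
theorem compression_step (hR : R ∈ invtSubmodule T) (hN : N ∈ invtSubmodule T) (hRK : R ≤ K)
    (hWR : W ≤ R) (hWN : W ≤ N) {x : E} {v : ↥(K ⊓ Wᗮ)} (hv : (v : E) ∈ R) (hxv : x - v ∈ N) :
    ((K ⊓ Wᗮ).orthogonalProjectionOnto (T v) : E) ∈ R ∧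
      T x - (K ⊓ Wᗮ).orthogonalProjectionOnto (T v) ∈ N := by
  have hTv : T v - (K ⊓ Wᗮ).orthogonalProjectionOnto (T v) ∈ W :=
    Submodule.sub_orthogonalProjectionOnto_inf_orthogonal_mem (hWR.trans hRK) (hRK (hR hv))
  constructor
  · simpa using R.sub_mem (hR hv) (hWR hTv)
  · have : T x - (K ⊓ Wᗮ).orthogonalProjectionOnto (T v) =
        T (x - v) + (T v - (K ⊓ Wᗮ).orthogonalProjectionOnto (T v)) := by
      rw [map_sub]; abel
    rw [this]
    exact N.add_mem (hN hxv) (hWN hTv)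

theorem compression_pow (hR : R ∈ invtSubmodule T) (hN : N ∈ invtSubmodule T) (hRK : R ≤ K)
    (hWR : W ≤ R) (hWN : W ≤ N) (k : ℕ) {x : E} {v : ↥(K ⊓ Wᗮ)} (hv : (v : E) ∈ R)
    (hxv : x - v ∈ N) :
    let S := (K ⊓ Wᗮ).orthogonalProjectionOnto.toLinearMap ∘ₗ T ∘ₗ (K ⊓ Wᗮ).subtype
    ((S ^ k) v : E) ∈ R ∧ (T ^ k) x - (S ^ k) v ∈ N := by
  intro S
  induction k with
  | zero => exact ⟨hv, hxv⟩
  | succ k ih =>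
    rw [pow_succ' T, pow_succ' S]
    exact compression_step hR hN hRK hWR hWN ih.1 ih.2

theorem comp_pow_comp_eq_compression (Bm : F →ₗ[𝕜] E) (Cm : E →ₗ[𝕜] G)
    (hB : LinearMap.range Bm ≤ R) (hR : R ∈ invtSubmodule T) (hN : N ∈ invtSubmodule T)
    (hC : N ≤ LinearMap.ker Cm) (hRK : R ≤ K) (hWR : W ≤ R) (hWN : W ≤ N) (k : ℕ) :
    Cm ∘ₗ (T ^ k) ∘ₗ Bm =
      (Cm ∘ₗ (K ⊓ Wᗮ).subtype) ∘ₗ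
        (((K ⊓ Wᗮ).orthogonalProjectionOnto.toLinearMap ∘ₗ T ∘ₗ (K ⊓ Wᗮ).subtype) ^ k) ∘ₗ
          ((K ⊓ Wᗮ).orthogonalProjectionOnto.toLinearMap ∘ₗ Bm) := by
  ext u
  have hu : Bm u - (K ⊓ Wᗮ).orthogonalProjectionOnto (Bm u) ∈ W :=
    Submodule.sub_orthogonalProjectionOnto_inf_orthogonal_mem (hWR.trans hRK) (hRK (hB ⟨u, rfl⟩))
  have hv : ((K ⊓ Wᗮ).orthogonalProjectionOnto (Bm u) : E) ∈ R := by
    simpa using R.sub_mem (hB ⟨u, rfl⟩) (hWR hu)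
  have hdiff := (compression_pow hR hN hRK hWR hWN k hv (hWN hu)).2
  simpa [sub_eq_zero] using hC hdiff

end Compression

section Kalman

variable {ι κ : Type*} [Fintype ι] [Fintype κ] [DecidableEq ι] [DecidableEq κ]

open Module.End

theorem Matrix.exists_pow_eq_sum_pow_lt_card {R : Type*} [CommRing R] [Nontrivial R]
    (A : Matrix ι ι R) (k : ℕ) :
    ∃ c : Fin (Fintype.card ι) → R, A ^ k = ∑ i, c i • A ^ (i : ℕ) := by
  rcases isEmpty_or_nonempty ι with _ | _
  · exact ⟨0, Subsingleton.elim _ _⟩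
  have hdeg : (Polynomial.X ^ k %ₘ A.charpoly).natDegree < Fintype.card ι := by
    rw [← A.charpoly_natDegree_eq_dim]
    refine Polynomial.natDegree_modByMonic_lt _ A.charpoly_monic fun h => ?_
    have hcard := A.charpoly_natDegree_eq_dim
    rw [h, Polynomial.natDegree_one] at hcard
    exact Fintype.card_ne_zero hcard.symm
  refine ⟨fun i => (Polynomial.X ^ k %ₘ A.charpoly).coeff i, ?_⟩
  rw [A.pow_eq_aeval_mod_charpoly, Polynomial.aeval_eq_sum_range' hdeg, Finset.sum_range]

theorem range_toEuclideanLin_pow_mul_le_reachE (A : Matrix ι ι ℝ) (B : Matrix ι κ ℝ) (k : ℕ) :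
    LinearMap.range (Matrix.toEuclideanLin (A ^ k * B)) ≤ reachE A B := by
  rintro _ ⟨u, rfl⟩
  obtain ⟨c, hc⟩ := A.exists_pow_eq_sum_pow_lt_card k
  rw [hc, Matrix.sum_mul, map_sum, LinearMap.sum_apply]
  refine Submodule.sum_mem _ fun i _ => ?_
  rw [Matrix.smul_mul, map_smul, LinearMap.smul_apply]
  exact Submodule.smul_mem _ _ (Submodule.mem_iSup_of_mem i ⟨u, rfl⟩)

theorem toEuclideanLin_mul_pow_apply_eq_zero {C : Matrix κ ι ℝ} {A : Matrix ι ι ℝ}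
    {x : EuclideanSpace ℝ ι} (hx : x ∈ unobsE C A) (k : ℕ) :
    Matrix.toEuclideanLin (C * A ^ k) x = 0 := by
  obtain ⟨c, hc⟩ := A.exists_pow_eq_sum_pow_lt_card k
  rw [hc, Matrix.mul_sum, map_sum, LinearMap.sum_apply]
  refine Finset.sum_eq_zero fun i _ => ?_
  rw [Matrix.mul_smul, map_smul, LinearMap.smul_apply, (Submodule.mem_iInf _).mp hx i, smul_zero]

theorem range_toEuclideanLin_le_reachE (A : Matrix ι ι ℝ) (B : Matrix ι κ ℝ) :
    LinearMap.range (Matrix.toEuclideanLin B) ≤ reachE A B := by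
  simpa using range_toEuclideanLin_pow_mul_le_reachE A B 0

theorem reachE_mem_invtSubmodule (A : Matrix ι ι ℝ) (B : Matrix ι κ ℝ) :
    reachE A B ∈ invtSubmodule (Matrix.toEuclideanLin A) := by
  refine (mem_invtSubmodule_iff_map_le _).mpr ?_
  rw [reachE, Submodule.map_iSup]
  refine iSup_le fun i => ?_
  rw [← LinearMap.range_comp, ← Matrix.toLpLin_mul_same, ← Matrix.mul_assoc, ← pow_succ']
  exact range_toEuclideanLin_pow_mul_le_reachE A B _

theorem unobsE_mem_invtSubmodule (C : Matrix κ ι ℝ) (A : Matrix ι ι ℝ) :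
    unobsE C A ∈ invtSubmodule (Matrix.toEuclideanLin A) := by
  intro x hx
  refine (Submodule.mem_iInf _).mpr fun i => LinearMap.mem_ker.mpr ?_
  rw [← LinearMap.comp_apply, ← Matrix.toLpLin_mul_same, Matrix.mul_assoc, ← pow_succ]
  exact toEuclideanLin_mul_pow_apply_eq_zero hx _

theorem unobsE_le_ker (C : Matrix κ ι ℝ) (A : Matrix ι ι ℝ) :
    unobsE C A ≤ LinearMap.ker (Matrix.toEuclideanLin C) := fun x hx => by
  simpa using toEuclideanLin_mul_pow_apply_eq_zero hx 0

end Kalman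

section Structured

variable {n : P → ℕ}

open Module.End

@[simp]
theorem toEuclideanLin_projMat_apply (S : Set P) (x : EuclideanSpace ℝ (BIdx n)) (b : BIdx n) :
    Matrix.toEuclideanLin (projMat n S) x b = if b.1 ∈ S then x b else 0 := by
  simp [Matrix.toLpLin_apply, Matrix.mulVec, dotProduct, projMat, ite_and]

theorem mem_coordE_iff {S : Set P} {x : EuclideanSpace ℝ (BIdx n)} :
    x ∈ coordE n S ↔ ∀ b : BIdx n, b.1 ∉ S → x b = 0 := by
  constructor
  · rintro ⟨y, rfl⟩ b hb
    simp [hb]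
  · refine fun h => ⟨x, ?_⟩
    ext b
    by_cases hb : b.1 ∈ S <;> simp [hb, h b]

theorem sum_toEuclideanLin_projMat_singleton (x : EuclideanSpace ℝ (BIdx n)) :
    ∑ j : P, Matrix.toEuclideanLin (projMat n {j}) x = x := by
  ext b
  simp only [WithLp.ofLp_sum, Finset.sum_apply, toEuclideanLin_projMat_apply,
    Set.mem_singleton_iff]
  simp

theorem isSymmetric_toEuclideanLin_projMat (S : Set P) :
    (Matrix.toEuclideanLin (projMat n S)).IsSymmetric := by
  refine Matrix.isSymmetric_toEuclideanLin_iff.mpr ?_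
  ext p q
  by_cases h : p = q
  · subst h; simp
  · simp [projMat, h, Ne.symm h]

/-- The paper's `U = ⊕_j (U ∩ X_j)`, phrased as invariance under every block projection: a form
that is visibly closed under `⊓` and `ᗮ`. -/
def IsStructured (n : P → ℕ) (U : Submodule ℝ (EuclideanSpace ℝ (BIdx n))) : Prop :=
  ∀ j : P, U ∈ invtSubmodule (Matrix.toEuclideanLin (projMat n {j}))

theorem IsStructured.inf {U V : Submodule ℝ (EuclideanSpace ℝ (BIdx n))} (hU : IsStructured n U)
    (hV : IsStructured n V) : IsStructured n (U ⊓ V) :=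
  fun j => invtSubmodule.inf_mem (hU j) (hV j)

theorem IsStructured.orthogonal {U : Submodule ℝ (EuclideanSpace ℝ (BIdx n))}
    (hU : IsStructured n U) : IsStructured n Uᗮ := fun j => by
  rw [← mem_invtSubmodule_adjoint_iff, (isSymmetric_toEuclideanLin_projMat _).adjoint_eq]
  exact hU j

theorem toEuclideanLin_projMat_singleton_of_mem_coordE {j k : P}
    {x : EuclideanSpace ℝ (BIdx n)} (hx : x ∈ coordE n {k}) :
    Matrix.toEuclideanLin (projMat n {j}) x = if j = k then x else 0 := by
  rw [mem_coordE_iff] at hx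
  ext b
  by_cases hbk : b.1 = k
  · by_cases hjk : j = k <;> simp [hbk, hjk, eq_comm]
  · by_cases hjk : j = k <;> simp [hbk, hjk, hx b hbk]

theorem isStructured_iSup {ρ : Sort*} {U : ρ → Submodule ℝ (EuclideanSpace ℝ (BIdx n))}
    (f : ρ → P) (hU : ∀ i, U i ≤ coordE n {f i}) : IsStructured n (⨆ i, U i) := fun j => by
  refine (mem_invtSubmodule_iff_map_le _).mpr ?_
  rw [Submodule.map_iSup]
  refine iSup_mono fun i => ?_
  rintro _ ⟨x, hx, rfl⟩
  rw [toEuclideanLin_projMat_singleton_of_mem_coordE (hU i hx)]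
  split_ifs
  exacts [hx, (U i).zero_mem]

theorem IsStructured.eq_iSup_inf_coordE {U : Submodule ℝ (EuclideanSpace ℝ (BIdx n))}
    (hU : IsStructured n U) : U = ⨆ j : P, (U ⊓ coordE n {j}) := by
  refine le_antisymm (fun x hx => ?_) (iSup_le fun j => inf_le_left)
  rw [← sum_toEuclideanLin_projMat_singleton x]
  exact Submodule.sum_mem _ fun j _ => Submodule.mem_iSup_of_mem j ⟨hU j hx, x, rfl⟩

end Structured

section Embedding

variable {n m : P → ℕ}

@[simp]
theorem mul_embMat_apply {α : Type*} [Fintype α] (G : Matrix α (BIdx n) ℝ) (S : Set P) (p : α)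
    (q : {a : BIdx n // a.1 ∈ S}) : (G * embMat n S) p q = G p q := by
  simp [Matrix.mul_apply, embMat]

theorem embMat_mul_apply {α : Type*} (S : Set P) (M : Matrix {a : BIdx n // a.1 ∈ S} α ℝ)
    (p : BIdx n) (q : α) :
    (embMat n S * M) p q = if h : p.1 ∈ S then M ⟨p, h⟩ q else 0 := by
  simp only [Matrix.mul_apply, embMat, Matrix.of_apply, ite_mul, one_mul, zero_mul]
  split_ifs with h
  · rw [Finset.sum_eq_single ⟨p, h⟩ (fun b _ hb => if_neg fun e => hb (Subtype.ext e.symm))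
      (by simp)]
    simp
  · exact Finset.sum_eq_zero fun b _ => if_neg fun (e : p = b) => h (e ▸ b.2)

@[simp]
theorem transpose_embMat_mulVec_apply (S : Set P) (x : BIdx n → ℝ)
    (q : {a : BIdx n // a.1 ∈ S}) : ((embMat n S)ᵀ *ᵥ x) q = x q := by
  simp [Matrix.mulVec, dotProduct, embMat]

theorem transpose_embMat_mul_embMat (S : Set P) : (embMat n S)ᵀ * embMat n S = 1 := by
  ext p q
  rw [mul_embMat_apply]
  simp [embMat, Matrix.one_apply, Subtype.ext_iff, eq_comm]

theorem mul_embMat_eq_embMat_mul_bcmp (G : Matrix (BIdx n) (BIdx m) ℝ) {S T : Set P}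
    (h : ∀ p q, q.1 ∈ T → G p q ≠ 0 → p.1 ∈ S) :
    G * embMat m T = embMat n S * bcmp G S T := by
  ext p q
  rw [mul_embMat_apply, embMat_mul_apply]
  split_ifs with hp
  · rfl
  · by_contra hG
    exact hp (h p q q.2 hG)

theorem transpose_embMat_mul_eq_bcmp_mul (G : Matrix (BIdx n) (BIdx m) ℝ) {S T : Set P}
    (h : ∀ p q, p.1 ∈ S → G p q ≠ 0 → q.1 ∈ T) :
    (embMat n S)ᵀ * G = bcmp G S T * (embMat m T)ᵀ := by
  have := congrArg Matrix.transpose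
    (mul_embMat_eq_embMat_mul_bcmp Gᵀ (S := T) (T := S) fun p q hq hG => h q p hq hG)
  rw [Matrix.transpose_mul, Matrix.transpose_transpose, Matrix.transpose_mul] at this
  exact this

end Embedding

section PosetCausal

variable [Preorder P] {n m r : P → ℕ}

theorem Inc.mul_embMat_downSet {A : Matrix (BIdx n) (BIdx n) ℝ} (hA : Inc (· ≤ ·) A) (i : P) :
    A * embMat n (downSet (· ≤ ·) {i}) =
      embMat n (downSet (· ≤ ·) {i}) * bcmp A (downSet (· ≤ ·) {i}) (downSet (· ≤ ·) {i}) :=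
  mul_embMat_eq_embMat_mul_bcmp A fun p q ⟨t, ht, hqt⟩ hpq =>
    ⟨t, ht, (not_not.mp (mt (hA p q) hpq)).trans hqt⟩

theorem Inc.mul_embMat_singleton {B : Matrix (BIdx n) (BIdx m) ℝ} (hB : Inc (· ≤ ·) B) (i : P) :
    B * embMat m {i} = embMat n (downSet (· ≤ ·) {i}) * bcmp B (downSet (· ≤ ·) {i}) {i} :=
  mul_embMat_eq_embMat_mul_bcmp B fun p q hq hpq => ⟨q.1, hq, not_not.mp (mt (hB p q) hpq)⟩

theorem Inc.transpose_embMat_upSet_mul {A : Matrix (BIdx n) (BIdx n) ℝ} (hA : Inc (· ≤ ·) A)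
    (i : P) :
    (embMat n (upSet (· ≤ ·) {i}))ᵀ * A =
      bcmp A (upSet (· ≤ ·) {i}) (upSet (· ≤ ·) {i}) * (embMat n (upSet (· ≤ ·) {i}))ᵀ :=
  transpose_embMat_mul_eq_bcmp_mul A fun p q ⟨t, ht, htp⟩ hpq =>
    ⟨t, ht, htp.trans (not_not.mp (mt (hA p q) hpq))⟩

theorem Inc.transpose_embMat_singleton_mul {C : Matrix (BIdx r) (BIdx n) ℝ}
    (hC : Inc (· ≤ ·) C) (i : P) :
    (embMat r {i})ᵀ * C = bcmp C {i} (upSet (· ≤ ·) {i}) * (embMat n (upSet (· ≤ ·) {i}))ᵀ :=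
  transpose_embMat_mul_eq_bcmp_mul C fun p q hp hpq => ⟨p.1, hp, not_not.mp (mt (hC p q) hpq)⟩

/-- The `i`-downstream subsystem driven by input block `i` reproduces the states of the full
system. -/
theorem embMat_mul_bcmp_pow_mul_bcmp {A : Matrix (BIdx n) (BIdx n) ℝ}
    {B : Matrix (BIdx n) (BIdx m) ℝ} (hA : Inc (· ≤ ·) A) (hB : Inc (· ≤ ·) B) (i : P) (k : ℕ) :
    embMat n (downSet (· ≤ ·) {i}) *
        (bcmp A (downSet (· ≤ ·) {i}) (downSet (· ≤ ·) {i}) ^ k *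
          bcmp B (downSet (· ≤ ·) {i}) {i}) =
      A ^ k * B * embMat m {i} := by
  induction k with
  | zero => simp [hB.mul_embMat_singleton i]
  | succ k ih =>
    rw [pow_succ', Matrix.mul_assoc, ← Matrix.mul_assoc, ← hA.mul_embMat_downSet i,
      Matrix.mul_assoc, ih, pow_succ', Matrix.mul_assoc, Matrix.mul_assoc, Matrix.mul_assoc]

theorem transpose_embMat_mul_mul_pow {C : Matrix (BIdx r) (BIdx n) ℝ}
    {A : Matrix (BIdx n) (BIdx n) ℝ} (hC : Inc (· ≤ ·) C) (hA : Inc (· ≤ ·) A) (i : P) (k : ℕ) :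
    (embMat r {i})ᵀ * (C * A ^ k) =
      bcmp C {i} (upSet (· ≤ ·) {i}) * bcmp A (upSet (· ≤ ·) {i}) (upSet (· ≤ ·) {i}) ^ k *
        (embMat n (upSet (· ≤ ·) {i}))ᵀ := by
  induction k with
  | zero => simp [hC.transpose_embMat_singleton_mul i]
  | succ k ih =>
    rw [pow_succ, ← Matrix.mul_assoc C, ← Matrix.mul_assoc, ih, Matrix.mul_assoc,
      hA.transpose_embMat_upSet_mul i, pow_succ, ← Matrix.mul_assoc, ← Matrix.mul_assoc]

end PosetCausal

section Subspaces

variable {n m r : P → ℕ}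

theorem RiE_le_reachE [Preorder P] {A : Matrix (BIdx n) (BIdx n) ℝ}
    {B : Matrix (BIdx n) (BIdx m) ℝ} (hA : Inc (· ≤ ·) A) (hB : Inc (· ≤ ·) B) (i : P) :
    RiE (· ≤ ·) A B i ≤ reachE A B := by
  rw [RiE, reachE, Submodule.map_iSup]
  refine iSup_le fun k => ?_
  rw [← LinearMap.range_comp, ← Matrix.toLpLin_mul_same, embMat_mul_bcmp_pow_mul_bcmp hA hB,
    Matrix.toLpLin_mul_same]
  exact (LinearMap.range_comp_le_range _ _).trans
    (range_toEuclideanLin_pow_mul_le_reachE A B k)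

theorem Rbar_le_reachE [Preorder P] {A : Matrix (BIdx n) (BIdx n) ℝ}
    {B : Matrix (BIdx n) (BIdx m) ℝ} (hA : Inc (· ≤ ·) A) (hB : Inc (· ≤ ·) B) :
    Rbar (· ≤ ·) A B ≤ reachE A B :=
  iSup_le fun _ => iSup_le fun i => iSup_le fun _ => inf_le_right.trans (RiE_le_reachE hA hB i)

theorem reachE_le_Rtil (A : Matrix (BIdx n) (BIdx n) ℝ) (B : Matrix (BIdx n) (BIdx m) ℝ) :
    reachE A B ≤ Rtil A B := fun x hx => by
  rw [← sum_toEuclideanLin_projMat_singleton x]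
  exact Submodule.sum_mem _ fun j _ => Submodule.mem_iSup_of_mem j ⟨x, hx, rfl⟩

theorem transpose_embMat_upSet_mulVec_eq_zero [Preorder P] {i j : P} (hij : ¬ i ≤ j)
    {x : EuclideanSpace ℝ (BIdx n)} (hx : x ∈ coordE n {j}) :
    (embMat n (upSet (· ≤ ·) {i}))ᵀ *ᵥ x = 0 := by
  funext q
  obtain ⟨t, ht, htq⟩ := q.2
  rw [Set.mem_singleton_iff] at ht
  rw [transpose_embMat_mulVec_apply, mem_coordE_iff.mp hx q fun hq => hij (ht ▸ hq ▸ htq)]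
  rfl

/-- Block `i` of the output `C A^k x` only sees the part of `x` upstream of `i`. -/
theorem transpose_embMat_mulVec_eq_zero_of_mem_NiE [Preorder P] {C : Matrix (BIdx r) (BIdx n) ℝ}
    {A : Matrix (BIdx n) (BIdx n) ℝ} (hC : Inc (· ≤ ·) C) (hA : Inc (· ≤ ·) A) {i : P}
    {x : EuclideanSpace ℝ (BIdx n)} (hx : x ∈ NiE (· ≤ ·) C A i) (k : ℕ) :
    (embMat r {i})ᵀ *ᵥ ((C * A ^ k) *ᵥ x) = 0 := by
  obtain ⟨y, hy, rfl⟩ := hx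
  rw [Matrix.mulVec_mulVec, transpose_embMat_mul_mul_pow hC hA, Matrix.toLpLin_apply,
    WithLp.ofLp_toLp, Matrix.mulVec_mulVec, Matrix.mul_assoc, transpose_embMat_mul_embMat,
    Matrix.mul_one]
  exact congrArg WithLp.ofLp (toEuclideanLin_mul_pow_apply_eq_zero hy k)

theorem Nbar_le_unobsE [Preorder P] {C : Matrix (BIdx r) (BIdx n) ℝ}
    {A : Matrix (BIdx n) (BIdx n) ℝ} (hC : Inc (· ≤ ·) C) (hA : Inc (· ≤ ·) A) :
    Nbar (· ≤ ·) C A ≤ unobsE C A := by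
  refine iSup_le fun j x hx => (Submodule.mem_iInf _).mpr fun k => LinearMap.mem_ker.mpr ?_
  have hxi : ∀ i ≤ j, x ∈ NiE (· ≤ ·) C A i ⊓ coordE n {j} := fun i hij =>
    (Submodule.mem_iInf _).mp ((Submodule.mem_iInf _).mp hx i) hij
  ext a
  have hrow := (transpose_embMat_mulVec_apply {a.1} ((C * A ^ (k : ℕ)) *ᵥ x) ⟨a, rfl⟩).symm
  rw [Matrix.toLpLin_apply, WithLp.ofLp_toLp, hrow]
  by_cases haj : a.1 ≤ j
  · rw [transpose_embMat_mulVec_eq_zero_of_mem_NiE hC hA (hxi _ haj).1]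
    rfl
  · rw [Matrix.mulVec_mulVec, transpose_embMat_mul_mul_pow hC hA, ← Matrix.mulVec_mulVec,
      transpose_embMat_upSet_mulVec_eq_zero haj (hxi j le_rfl).2, Matrix.mulVec_zero]
    rfl

theorem isStructured_Rtil (A : Matrix (BIdx n) (BIdx n) ℝ) (B : Matrix (BIdx n) (BIdx m) ℝ) :
    IsStructured n (Rtil A B) :=
  isStructured_iSup id fun _ => LinearMap.map_le_range

theorem isStructured_Rbar (le : P → P → Prop) (A : Matrix (BIdx n) (BIdx n) ℝ)
    (B : Matrix (BIdx n) (BIdx m) ℝ) : IsStructured n (Rbar le A B) :=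
  isStructured_iSup id fun _ => iSup_le fun _ => iSup_le fun _ => inf_le_left

theorem isStructured_Nbar [Preorder P] (C : Matrix (BIdx r) (BIdx n) ℝ)
    (A : Matrix (BIdx n) (BIdx n) ℝ) : IsStructured n (Nbar (· ≤ ·) C A) :=
  isStructured_iSup id fun j => (iInf_le _ j).trans ((iInf_le _ le_rfl).trans inf_le_right)

end Subspaces

/-- Kalman-type reduction for poset-causal systems: for a poset-causal system
`Σ_P ∼ (A,B,C,D)` with structured subspaces `R̄ ⊆ R ⊆ R̃` and `N̄ ⊆ N`, the compressions
`Ã, B̃, C̃` of `A, B, C` to the structured subspace `X̃ = R̃ ⊖ (R̄ ∩ N̄)` satisfy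
`C A^k B = C̃ Ã^k B̃` for all `k ≥ 0`, so the reduced system has the same transfer function
moments as `Σ`; moreover `X̃` is a structured subspace: `X̃ = ⊕_{j∈P} (X̃ ∩ X_j)`. -/
theorem poset_causal_kalman_reduction [PartialOrder P] (n m r : P → ℕ)
    (A : Matrix (BIdx n) (BIdx n) ℝ) (B : Matrix (BIdx n) (BIdx m) ℝ)
    (C : Matrix (BIdx r) (BIdx n) ℝ)
    (hA : Inc (· ≤ ·) A) (hB : Inc (· ≤ ·) B) (hC : Inc (· ≤ ·) C) :
    (∀ k : ℕ,
        Matrix.toEuclideanLin (C * A ^ k * B) =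
          (Matrix.toEuclideanLin C ∘ₗ
              (Rtil A B ⊓ (Rbar (· ≤ ·) A B ⊓ Nbar (· ≤ ·) C A)ᗮ).subtype) ∘ₗ
            (((Submodule.orthogonalProjectionOnto
                  (Rtil A B ⊓ (Rbar (· ≤ ·) A B ⊓ Nbar (· ≤ ·) C A)ᗮ)).toLinearMap ∘ₗ
                Matrix.toEuclideanLin A ∘ₗ
                (Rtil A B ⊓ (Rbar (· ≤ ·) A B ⊓ Nbar (· ≤ ·) C A)ᗮ).subtype) ^ k) ∘ₗ
            ((Submodule.orthogonalProjectionOnto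
                (Rtil A B ⊓ (Rbar (· ≤ ·) A B ⊓ Nbar (· ≤ ·) C A)ᗮ)).toLinearMap ∘ₗ
              Matrix.toEuclideanLin B)) ∧
      Rtil A B ⊓ (Rbar (· ≤ ·) A B ⊓ Nbar (· ≤ ·) C A)ᗮ =
        ⨆ j : P, (Rtil A B ⊓ (Rbar (· ≤ ·) A B ⊓ Nbar (· ≤ ·) C A)ᗮ ⊓ coordE n {j}) := by
  refine ⟨fun k => ?_, ?_⟩
  · rw [Matrix.toLpLin_mul_same, Matrix.toLpLin_mul_same, Matrix.toLpLin_pow,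
      LinearMap.comp_assoc]
    exact comp_pow_comp_eq_compression _ _ (range_toEuclideanLin_le_reachE A B)
      (reachE_mem_invtSubmodule A B) (unobsE_mem_invtSubmodule C A) (unobsE_le_ker C A)
      (reachE_le_Rtil A B) (inf_le_left.trans (Rbar_le_reachE hA hB))
      (inf_le_right.trans (Nbar_le_unobsE hC hA)) k
  · exact ((isStructured_Rtil A B).inf
      ((isStructured_Rbar _ A B).inf (isStructured_Nbar C A)).orthogonal).eq_iSup_inf_coordE
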